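/- Let C_n be the cycle graph on n ≥ 3 vertices and let f be a divisor on C_n. Then ρ(f) = −1 if deg(f) ≤ −1; ρ(f) = −1 if deg(f) = 0 and f is bad; ρ(f) = 0 if deg(f) = 0 and f is good; and ρ(f) = deg(f) − 1 if deg(f) ≥ 1. -/

import Mathlib

/-!
Linear equivalence preserves the degree, so a divisor of negative degree is not L-effective and
an L-effective divisor of degree 0 is equivalent to 0; this settles `deg f ≤ 0`.

For `deg f ≥ 1` the cycle enters twice. In the Picard group, the relation `2 ε_u ∼ ε_a + ε_b` at
a vertex `u` with neighbours `a, b` says that the two steps `ε_a - ε_u`, `ε_b - ε_u` are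
opposite, so by connectedness every step along an edge is `±t` for one class `t`. The steps
generate the classes of degree 0, and `ε_u ± t` is again some `ε_w`; hence every divisor of
degree 1 is equivalent to some `ε_w`, and every divisor of positive degree is L-effective.
Conversely `ε_v ∼ ε_w` forces `v = w`: if `ε_w - ε_v = x Δ`, at most one edge leaves the set
where `x` is maximal, but all degrees are even, so every cut is even and `x` is constant.
Hence `f - λ` is not L-effective for one of `λ = d ε_u`, `λ = (d - 1) ε_u + ε_w` with `w ≠ u`,
where `d = deg f`, and `ρ(f) = d - 1`.
-/

/-- A finite loopless multigraph on vertex set `V`, given by its symmetric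
edge-multiplicity function `e`. -/
structure Multigraph (V : Type*) [Fintype V] [DecidableEq V] where
  e : V → V → ℕ
  symm : ∀ u v, e u v = e v u
  loopless : ∀ v, e v v = 0

namespace Multigraph

variable {V : Type*} [Fintype V] [DecidableEq V]

/-- The degree of a vertex of a multigraph. -/
def vdeg (G : Multigraph V) (v : V) : ℕ := ∑ u, G.e v u

/-- The number of edges of a multigraph. -/
def edgeCount (G : Multigraph V) : ℕ := (∑ u, ∑ v, G.e u v) / 2

/-- The underlying simple graph (adjacency) of a multigraph. -/
def toSimple (G : Multigraph V) : SimpleGraph V where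
  Adj u v := G.e u v ≠ 0
  symm := by constructor; intro u v h; show G.e v u ≠ 0; rwa [G.symm]
  loopless := by constructor; intro v h; exact h (G.loopless v)

/-- A multigraph is connected if its underlying simple graph is. -/
def Connected (G : Multigraph V) : Prop := G.toSimple.Connected

/-- The degree of a divisor `f : V → ℤ`. -/
def degree (f : V → ℤ) : ℤ := ∑ v, f v

/-- A divisor is effective if all its values are nonnegative. -/
def Effective (f : V → ℤ) : Prop := ∀ v, 0 ≤ f v

/-- The divisor `x · Δ_G`, where `Δ_G` is the Laplacian matrix of `G`. -/
def lapApply (G : Multigraph V) (x : V → ℤ) : V → ℤ :=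
  fun v => x v * (G.vdeg v : ℤ) - ∑ u, x u * (G.e u v : ℤ)

/-- Linear equivalence of divisors: `g = f + x Δ_G` for some `x : V → ℤ`. -/
def LinEquiv (G : Multigraph V) (f g : V → ℤ) : Prop :=
  ∃ x : V → ℤ, g = f + G.lapApply x

/-- A divisor is L-effective if it is linearly equivalent to an effective divisor. -/
def LEffective (G : Multigraph V) (f : V → ℤ) : Prop :=
  ∃ g : V → ℤ, G.LinEquiv f g ∧ Effective g

/-- The Baker–Norine rank of a divisor: `-1` if `f` is not L-effective, and
otherwise the largest `r ≥ 0` such that `f - λ` is L-effective for every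
effective divisor `λ` of degree `r`. -/
noncomputable def rank (G : Multigraph V) (f : V → ℤ) : ℤ :=
  sSup ({-1} ∪ {r : ℤ | 0 ≤ r ∧
    ∀ l : V → ℤ, Effective l → degree l = r → G.LEffective (f - l)})

/-- The divisor `ε_v`. -/
def epsDiv (v : V) : V → ℤ := fun u => if u = v then 1 else 0

/-- A tree: a connected acyclic (multi)graph. -/
def IsTree (G : Multigraph V) : Prop :=
  G.toSimple.IsTree ∧ ∀ u v, G.e u v ≤ 1

/-- A cycle graph: connected, and every vertex has degree 2. -/
def IsCycleGraph (G : Multigraph V) : Prop :=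
  G.Connected ∧ ∀ v, G.vdeg v = 2

/-- An edge: two vertices joined by a single edge. -/
def IsEdgeGraph (G : Multigraph V) : Prop :=
  Fintype.card V = 2 ∧ G.Connected ∧ ∀ u v, G.e u v ≤ 1

/-- A good divisor (on a cycle): degree `0` and linearly equivalent to `0`. -/
def Good (G : Multigraph V) (f : V → ℤ) : Prop :=
  degree f = 0 ∧ G.LinEquiv f 0

/-- A bad divisor (on a cycle): degree `0` and not linearly equivalent to `0`. -/
def Bad (G : Multigraph V) (f : V → ℤ) : Prop :=
  degree f = 0 ∧ ¬ G.LinEquiv f 0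

/-- The induced sub-multigraph on a finite set `S` of vertices. -/
def induce (G : Multigraph V) (S : Finset V) : Multigraph {x // x ∈ S} where
  e a b := G.e a.1 b.1
  symm := fun a b => G.symm a.1 b.1
  loopless := fun a => G.loopless a.1

/-- `v` decomposes the induced subgraph of `G` on `S` into the induced
subgraphs on `V1` and `U`: they cover `S`, meet exactly in `v`, are both
connected, and there is no edge between `V1 \ {v}` and `U \ {v}`. -/
def DecompOn (G : Multigraph V) (S : Finset V) (v : V) (V1 U : Finset V) : Prop :=
  V1 ∪ U = S ∧ V1 ∩ U = {v} ∧
  (G.induce V1).Connected ∧ (G.induce U).Connected ∧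
  ∀ a ∈ V1, ∀ b ∈ U, a ≠ v → b ≠ v → G.e a b = 0

/-- `v` decomposes `G` into the induced subgraphs on `V1` and `U`. -/
def Decomp (G : Multigraph V) (v : V) (V1 U : Finset V) : Prop :=
  G.DecompOn Finset.univ v V1 U

/-- The contraction `f_{G/H}` of a divisor `f`, where `H = G(U)` and
`G/H = G(V1)`, the cut vertex being `v`. -/
def contractDiv (f : V → ℤ) (v : V) (V1 U : Finset V) : {x // x ∈ V1} → ℤ :=
  fun u => if u.1 = v then ∑ w ∈ U, f w else f u.1

/-- The zero `f_{N(H)}` of a divisor `f`, where `H = G(U)`, the cut vertex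
being `v`. -/
def zeroDiv (f : V → ℤ) (v : V) (U : Finset V) : {x // x ∈ U} → ℤ :=
  fun u => if u.1 = v then - ∑ w ∈ U.erase v, f w else f u.1

/-- `ε_v` as a divisor on an induced subgraph. -/
def epsDivOn (S : Finset V) (v : V) : {x // x ∈ S} → ℤ :=
  fun u => if u.1 = v then 1 else 0

/-- A simple cycle of `G`, given as a sub-multigraph (an edge-multiplicity
function bounded by that of `G`) which is connected on its support and in
which every vertex of its (nonempty) support has degree 2. -/
def IsCycleSubgraph (G : Multigraph V) (h : V → V → ℕ) : Prop :=
  (∀ u v, h u v ≤ G.e u v) ∧ (∀ u v, h u v = h v u) ∧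
  (∀ v, (∑ u, h v u = 0) ∨ (∑ u, h v u = 2)) ∧
  (∃ v, ∑ u, h v u ≠ 0) ∧
  (∀ v w, (∑ u, h v u ≠ 0) → (∑ u, h w u ≠ 0) →
    Relation.ReflTransGen (fun a b => h a b ≠ 0) v w)

/-- The vertex support of a sub-multigraph. -/
def cycleSupport (h : V → V → ℕ) : Finset V :=
  Finset.univ.filter (fun v => ∑ u, h v u ≠ 0)

/-- A cactus: a connected multigraph in which any two distinct simple cycles
have at most one vertex in common (in particular every edge has multiplicity
at most 2, since parallel edges form 2-cycles). -/
def IsCactus (G : Multigraph V) : Prop :=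
  G.Connected ∧ (∀ u v, G.e u v ≤ 2) ∧
  ∀ h₁ h₂ : V → V → ℕ, G.IsCycleSubgraph h₁ → G.IsCycleSubgraph h₂ → h₁ ≠ h₂ →
    (cycleSupport h₁ ∩ cycleSupport h₂).card ≤ 1

/-- One step of a block elimination scheme: `G(S')` is obtained from `G(S)`
by contracting a free block (an edge or a cycle) `G(U)` at the vertex `v`. -/
def BlockStep (G : Multigraph V) (S S' : Finset V) : Prop :=
  ∃ (v : V) (U : Finset V), G.DecompOn S v S' U ∧
    ((G.induce U).IsEdgeGraph ∨ (G.induce U).IsCycleGraph)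

/-- A block elimination scheme: a sequence of contractions of free blocks,
starting from `G` and ending at a single vertex. -/
def HasBlockEliminationScheme (G : Multigraph V) : Prop :=
  ∃ (k : ℕ) (S : ℕ → Finset V), S 0 = Finset.univ ∧ (S k).card = 1 ∧
    ∀ i < k, G.BlockStep (S i) (S (i + 1))

end Multigraph

open Multigraph

variable {V : Type*} [Fintype V] [DecidableEq V]

namespace Multigraph

open Finset

section General

variable (G : Multigraph V)

theorem lapApply_apply (x : V → ℤ) (u : V) :
    G.lapApply x u = ∑ w, (G.e u w : ℤ) * (x u - x w) := by
  simp only [lapApply, vdeg, Nat.cast_sum, mul_sub, sum_sub_distrib, mul_sum, G.symm _ u]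
  simp only [mul_comm]

theorem lapApply_epsDiv (u : V) :
    G.lapApply (epsDiv u) = (G.vdeg u : ℤ) • epsDiv u - fun w => (G.e u w : ℤ) := by
  ext w
  by_cases h : w = u
  · subst h
    simp [lapApply, epsDiv, G.loopless]
  · simp [lapApply, epsDiv, h, G.symm u w]

def lapHom : (V → ℤ) →+ (V → ℤ) where
  toFun := G.lapApply
  map_zero' := by ext u; simp [lapApply_apply]
  map_add' x y := by
    ext u
    simp only [lapApply_apply, Pi.add_apply, ← sum_add_distrib]
    exact sum_congr rfl fun w _ => by ring

def principal : AddSubgroup (V → ℤ) := G.lapHom.range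

abbrev Pic : Type _ := (V → ℤ) ⧸ G.principal

variable {G}

theorem linEquiv_iff_mk_eq {f g : V → ℤ} : G.LinEquiv f g ↔ (f : G.Pic) = g := by
  rw [QuotientAddGroup.eq]
  constructor
  · rintro ⟨x, rfl⟩
    exact ⟨x, by simp [lapHom]⟩
  · rintro ⟨x, hx⟩
    exact ⟨x, by rw [show G.lapApply x = -f + g from hx]; abel⟩

variable (G) in
theorem mk_lapApply (x : V → ℤ) : (G.lapApply x : G.Pic) = 0 :=
  (QuotientAddGroup.eq_zero_iff _).2 ⟨x, rfl⟩

theorem sum_smul_epsDiv (f : V → ℤ) : ∑ v, f v • epsDiv v = f := by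
  ext u
  simp [epsDiv]

theorem mk_eq_sum_smul (f : V → ℤ) : (f : G.Pic) = ∑ v, f v • (epsDiv v : G.Pic) := by
  conv_lhs => rw [← sum_smul_epsDiv f]
  rw [← QuotientAddGroup.mk'_apply, map_sum]
  simp

omit [DecidableEq V] in
theorem degree_add (f g : V → ℤ) : degree (f + g) = degree f + degree g := by
  simp [degree, sum_add_distrib]

omit [DecidableEq V] in
theorem degree_sub (f g : V → ℤ) : degree (f - g) = degree f - degree g := by
  simp [degree, sum_sub_distrib]

theorem degree_smul_epsDiv (c : ℤ) (v : V) : degree (c • epsDiv v) = c := by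
  simp [degree, epsDiv]

omit [Fintype V] in
theorem effective_epsDiv (v : V) : Effective (epsDiv v) := by
  intro u
  unfold epsDiv
  split_ifs <;> simp

theorem degree_epsDiv (v : V) : degree (epsDiv v) = 1 := by
  simp [degree, epsDiv]

omit [Fintype V] in
theorem effective_smul_epsDiv {c : ℤ} (hc : 0 ≤ c) (v : V) : Effective (c • epsDiv v) :=
  fun u => mul_nonneg hc (effective_epsDiv v u)

variable (G) in
theorem degree_lapApply (x : V → ℤ) : degree (G.lapApply x) = 0 := by
  have hswap : ∑ u, ∑ w, (G.e u w : ℤ) * x w = ∑ u, ∑ w, (G.e u w : ℤ) * x u := by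
    rw [sum_comm]
    simp only [G.symm]
  simp only [degree, lapApply_apply, mul_sub, sum_sub_distrib, hswap, sub_self]

theorem LinEquiv.degree_eq {f g : V → ℤ} (h : G.LinEquiv f g) : degree f = degree g := by
  obtain ⟨x, rfl⟩ := h
  rw [degree_add, degree_lapApply, add_zero]

omit [DecidableEq V] in
theorem Effective.degree_nonneg {f : V → ℤ} (h : Effective f) : 0 ≤ degree f :=
  sum_nonneg fun v _ => h v

omit [DecidableEq V] in
theorem Effective.eq_zero_of_degree_eq_zero {f : V → ℤ} (h : Effective f) (h0 : degree f = 0) :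
    f = 0 := by
  ext v
  exact (sum_eq_zero_iff_of_nonneg fun u _ => h u).1 h0 v (mem_univ v)

theorem LEffective.degree_nonneg {f : V → ℤ} (h : G.LEffective f) : 0 ≤ degree f := by
  obtain ⟨g, hfg, hg⟩ := h
  exact hfg.degree_eq ▸ hg.degree_nonneg

theorem lEffective_iff_linEquiv_zero {f : V → ℤ} (hf : degree f = 0) :
    G.LEffective f ↔ G.LinEquiv f 0 := by
  refine ⟨fun ⟨g, hfg, hg⟩ => ?_, fun h => ⟨0, h, fun _ => le_rfl⟩⟩
  rwa [← hg.eq_zero_of_degree_eq_zero (hfg.degree_eq ▸ hf)]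

theorem linEquiv_of_lEffective_sub {f l : V → ℤ} (hdeg : degree f = degree l)
    (h : G.LEffective (f - l)) : G.LinEquiv f l := by
  rw [lEffective_iff_linEquiv_zero (by rw [degree_sub, hdeg, sub_self]), linEquiv_iff_mk_eq,
    QuotientAddGroup.mk_sub, QuotientAddGroup.mk_zero, sub_eq_zero] at h
  exact linEquiv_iff_mk_eq.2 h

theorem LEffective.of_sub {f l : V → ℤ} (h : G.LEffective (f - l)) (hl : Effective l) :
    G.LEffective f := by
  obtain ⟨g, ⟨x, rfl⟩, hg⟩ := h
  refine ⟨f - l + G.lapApply x + l, ⟨x, by abel⟩, fun v => ?_⟩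
  simpa using add_nonneg (hg v) (hl v)

def RankAtLeast (f : V → ℤ) (r : ℤ) : Prop :=
  ∀ l : V → ℤ, Effective l → degree l = r → G.LEffective (f - l)

theorem rankAtLeast_zero_iff {f : V → ℤ} : G.RankAtLeast f 0 ↔ G.LEffective f := by
  refine ⟨fun h => by simpa using h 0 (fun _ => le_rfl) (by simp [degree]), fun h l hl hdeg => ?_⟩
  rwa [hl.eq_zero_of_degree_eq_zero hdeg, sub_zero]

theorem RankAtLeast.mono [Nonempty V] {f : V → ℤ} {r s : ℤ} (h : G.RankAtLeast f r)
    (hsr : s ≤ r) : G.RankAtLeast f s := by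
  intro l hl hdeg
  obtain ⟨v⟩ := ‹Nonempty V›
  have hext := effective_smul_epsDiv (sub_nonneg.2 hsr) v
  refine LEffective.of_sub (l := (r - s) • epsDiv v) ?_ hext
  convert h (l + (r - s) • epsDiv v) (fun u => add_nonneg (hl u) (hext u))
    (by rw [degree_add, hdeg, degree_smul_epsDiv]; ring) using 1
  abel

theorem not_rankAtLeast_of_degree_lt [Nonempty V] {f : V → ℤ} {r : ℤ} (hr : 0 ≤ r)
    (hlt : degree f < r) : ¬ G.RankAtLeast f r := by
  intro h
  obtain ⟨v⟩ := ‹Nonempty V›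
  have := (h _ (effective_smul_epsDiv hr v) (degree_smul_epsDiv r v)).degree_nonneg
  rw [degree_sub, degree_smul_epsDiv] at this
  omega

theorem rank_eq [Nonempty V] {f : V → ℤ} {b : ℤ} (hb : -1 ≤ b) (h : 0 ≤ b → G.RankAtLeast f b)
    (hnot : ¬ G.RankAtLeast f (b + 1)) : G.rank f = b := by
  refine IsGreatest.csSup_eq ⟨?_, ?_⟩
  · rcases hb.eq_or_lt with rfl | hb
    · exact Or.inl rfl
    · exact Or.inr ⟨by omega, h (by omega)⟩
  · rintro r (rfl | ⟨hr, hP⟩)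
    · exact hb
    · by_contra! hlt
      exact hnot (RankAtLeast.mono (G := G) hP hlt)

end General

section Connected

variable {G : Multigraph V}

theorem Connected.induction (hG : G.Connected) {p : V → Prop} {u : V} (hu : p u)
    (hp : ∀ v w, G.e v w ≠ 0 → p v → p w) (v : V) : p v := by
  obtain ⟨W⟩ := hG.preconnected u v
  induction W with
  | nil => exact hu
  | cons hadj _ ih => exact ih (hp _ _ hadj hu)

theorem Connected.sub_mem_of_adj {A : Type*} [AddCommGroup A] (hG : G.Connected)
    {H : AddSubgroup A} {φ : V → A} (h : ∀ v w, G.e v w ≠ 0 → φ w - φ v ∈ H) (u v : V) :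
    φ v - φ u ∈ H :=
  hG.induction (p := fun v => φ v - φ u ∈ H) (u := u) (by simp)
    (fun v w hvw hv => by simpa using H.add_mem (h v w hvw) hv) v

theorem Connected.eq_univ_of_sum_cut_eq_zero (hG : G.Connected) {S : Finset V} (hS : S.Nonempty)
    (hcut : ∑ u ∈ S, ∑ w ∈ Sᶜ, G.e u w = 0) : S = univ := by
  obtain ⟨u, hu⟩ := hS
  refine eq_univ_of_forall (hG.induction hu fun v w hvw hv => ?_)
  by_contra hw
  exact hvw (sum_eq_zero_iff.1 (sum_eq_zero_iff.1 hcut v hv) w (mem_compl.2 hw))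

theorem even_sum_cut (heven : ∀ v, Even (G.vdeg v)) (S : Finset V) :
    Even (∑ u ∈ S, ∑ w ∈ Sᶜ, G.e u w) := by
  have hinner : Even (∑ u ∈ S, ∑ w ∈ S, G.e u w) := by
    rw [← sum_product', ← ZMod.natCast_eq_zero_iff_even, Nat.cast_sum]
    refine sum_involution (fun p _ => p.swap) (fun p _ => ?_) (fun p _ hp hswap => hp ?_)
      (fun p hp => by simpa [and_comm] using hp) (fun p _ => p.swap_swap)
    · rw [Prod.fst_swap, Prod.snd_swap, G.symm p.2, ← Nat.cast_add, ← two_mul, Nat.cast_mul]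
      exact mul_eq_zero_of_left rfl _
    · rw [show p.1 = p.2 from congrArg Prod.snd hswap, G.loopless, Nat.cast_zero]
  have hdeg : ∑ u ∈ S, G.vdeg u = ∑ u ∈ S, ∑ w ∈ S, G.e u w + ∑ u ∈ S, ∑ w ∈ Sᶜ, G.e u w := by
    simp only [vdeg, ← sum_add_distrib, sum_add_sum_compl]
  exact (Nat.even_add.1 (hdeg ▸ even_sum _ fun v _ => heven v)).1 hinner

theorem sum_cut_le_sum_lapApply {x : V → ℤ} {m : V} (hm : ∀ u, x u ≤ x m) {S : Finset V}
    (hS : ∀ u, u ∈ S ↔ x u = x m) :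
    ∑ u ∈ S, ∑ w ∈ Sᶜ, (G.e u w : ℤ) ≤ ∑ u ∈ S, G.lapApply x u := by
  refine sum_le_sum fun u hu => ?_
  rw [lapApply_apply, ← sum_compl_add_sum S, (hS u).1 hu]
  refine le_add_of_le_of_nonneg (sum_le_sum fun w hw => ?_)
    (sum_nonneg fun w _ => mul_nonneg (Nat.cast_nonneg _) (sub_nonneg.2 (hm w)))
  have hlt : x w < x m := lt_of_le_of_ne (hm w) fun h => mem_compl.1 hw ((hS w).2 h)
  nlinarith [(Nat.cast_nonneg (G.e u w) : (0 : ℤ) ≤ _)]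

theorem Connected.eq_of_linEquiv_epsDiv (hG : G.Connected) (heven : ∀ v, Even (G.vdeg v))
    {v w : V} (h : G.LinEquiv (epsDiv v) (epsDiv w)) : v = w := by
  obtain ⟨x, hx⟩ := h
  have := hG.nonempty
  obtain ⟨m, hm⟩ := Finite.exists_max x
  set S := univ.filter fun u => x u = x m
  have hS : ∀ u, u ∈ S ↔ x u = x m := by simp [S]
  have hcut : ∑ u ∈ S, ∑ y ∈ Sᶜ, (G.e u y : ℤ) ≤ 1 :=
    calc _ ≤ ∑ u ∈ S, G.lapApply x u := sum_cut_le_sum_lapApply hm hS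
      _ = ∑ u ∈ S, epsDiv w u - ∑ u ∈ S, epsDiv v u := by
        rw [← sum_sub_distrib]; simp [hx]
      _ ≤ 1 := by simp only [epsDiv, sum_ite_eq']; split_ifs <;> norm_num
  have hcut0 : ∑ u ∈ S, ∑ y ∈ Sᶜ, G.e u y = 0 := by
    obtain ⟨k, hk⟩ := even_sum_cut heven S
    push_cast [← Nat.cast_sum] at hcut
    omega
  have hSuniv := hG.eq_univ_of_sum_cut_eq_zero ⟨m, (hS m).2 rfl⟩ hcut0
  have hconst : ∀ u, x u = x m := fun u => (hS u).1 (hSuniv ▸ mem_univ u)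
  have hlap : G.lapApply x = 0 := by
    ext u
    simp [lapApply_apply, hconst]
  have := congrFun hx v
  simp only [hlap, add_zero, epsDiv] at this
  split_ifs at this with hvw
  · exact hvw
  · exact absurd this (by norm_num)

end Connected

section Cycle

variable {G : Multigraph V}

theorem IsCycleGraph.exists_e_eq_epsDiv_add_epsDiv (hC : G.IsCycleGraph) (u : V) :
    ∃ a b, (fun w => (G.e u w : ℤ)) = epsDiv a + epsDiv b := by
  obtain ⟨a, b, hab⟩ := Multiset.card_eq_two.1 (show Multiset.card (∑ w, G.e u w • {w}) = 2 by
    simpa [map_sum, vdeg] using hC.2 u)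
  refine ⟨a, b, funext fun w => ?_⟩
  have := congrArg (Multiset.count w) hab
  simp only [Multiset.count_sum', Multiset.count_nsmul, Multiset.count_singleton, mul_ite,
    mul_one, mul_zero, sum_ite_eq, mem_univ, if_true] at this
  simp only [this, Multiset.insert_eq_cons, Multiset.count_cons, Multiset.count_singleton,
    Pi.add_apply, epsDiv]
  push_cast
  ring

theorem IsCycleGraph.mk_epsDiv_sub_eq_neg (hC : G.IsCycleGraph) {u a b : V}
    (hab : (fun w => (G.e u w : ℤ)) = epsDiv a + epsDiv b) :
    (epsDiv a : G.Pic) - epsDiv u = -((epsDiv b : G.Pic) - epsDiv u) := by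
  have h := G.mk_lapApply (epsDiv u)
  rw [lapApply_epsDiv, hC.2 u, hab, QuotientAddGroup.mk_sub, QuotientAddGroup.mk_add,
    QuotientAddGroup.mk_zsmul] at h
  rw [← sub_eq_zero, ← neg_eq_zero, ← h]
  module

omit [Fintype V] [DecidableEq V] in
theorem neg_mem_pair_neg {A : Type*} [AddGroup A] {t x : A} (h : x ∈ ({t, -t} : Set A)) :
    -x ∈ ({t, -t} : Set A) := by
  rcases h with rfl | rfl <;> simp

theorem IsCycleGraph.mk_sub_mem_of_adj (hC : G.IsCycleGraph) {t : G.Pic} {u w z : V}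
    (hw : G.e u w ≠ 0) (ht : (epsDiv w : G.Pic) - epsDiv u ∈ ({t, -t} : Set G.Pic))
    (hz : G.e u z ≠ 0) : (epsDiv z : G.Pic) - epsDiv u ∈ ({t, -t} : Set G.Pic) := by
  obtain ⟨a, b, hab⟩ := hC.exists_e_eq_epsDiv_add_epsDiv u
  have hadj : ∀ y, G.e u y ≠ 0 → y = a ∨ y = b := by
    intro y hy
    have := congrFun hab y
    by_contra! h
    rw [Pi.add_apply, epsDiv, epsDiv, if_neg h.1, if_neg h.2] at this
    exact hy (by exact_mod_cast this)
  have hab' := hC.mk_epsDiv_sub_eq_neg hab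
  have ha : (epsDiv a : G.Pic) - epsDiv u ∈ ({t, -t} : Set G.Pic) := by
    rcases hadj w hw with rfl | rfl
    · exact ht
    · exact hab' ▸ neg_mem_pair_neg ht
  rcases hadj z hz with rfl | rfl
  · exact ha
  · exact (neg_eq_iff_eq_neg.2 hab') ▸ neg_mem_pair_neg ha

theorem IsCycleGraph.exists_step (hC : G.IsCycleGraph) :
    ∃ t : G.Pic, ∀ u w, G.e u w ≠ 0 →
      (epsDiv w : G.Pic) - epsDiv u ∈ ({t, -t} : Set G.Pic) := by
  obtain ⟨u₀⟩ := hC.1.nonempty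
  obtain ⟨w₀, -, hw₀⟩ := exists_ne_zero_of_sum_ne_zero ((hC.2 u₀).trans_ne two_ne_zero)
  refine ⟨(epsDiv w₀ : G.Pic) - epsDiv u₀, fun u => hC.1.induction
    (p := fun u => ∀ w, G.e u w ≠ 0 → (epsDiv w : G.Pic) - epsDiv u ∈ _)
    (fun w hw => hC.mk_sub_mem_of_adj hw₀ (Or.inl rfl) hw) (fun v w hvw hv z hz => ?_) u⟩
  refine hC.mk_sub_mem_of_adj (w := v) (by rwa [G.symm]) ?_ hz
  simpa only [neg_sub] using neg_mem_pair_neg (hv w hvw)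

theorem IsCycleGraph.exists_mk_eq_add_zsmul (hC : G.IsCycleGraph) {t : G.Pic}
    (ht : ∀ u w, G.e u w ≠ 0 → (epsDiv w : G.Pic) - epsDiv u ∈ ({t, -t} : Set G.Pic))
    (u : V) (k : ℤ) : ∃ w : V, (epsDiv w : G.Pic) = epsDiv u + k • t := by
  have hstep : ∀ u : V, ∃ x y : V,
      (epsDiv x : G.Pic) - epsDiv u = t ∧ (epsDiv y : G.Pic) - epsDiv u = -t := by
    intro u
    obtain ⟨a, b, hab⟩ := hC.exists_e_eq_epsDiv_add_epsDiv u
    have hab' := hC.mk_epsDiv_sub_eq_neg hab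
    have ha : G.e u a ≠ 0 := by
      have := congrFun hab a
      simp only [Pi.add_apply, epsDiv] at this
      split_ifs at this <;> omega
    rcases ht u a ha with h | h
    · exact ⟨a, b, h, by rw [← h, hab', neg_neg]⟩
    · exact ⟨b, a, by rw [← neg_neg t, ← h, hab', neg_neg], h⟩
  induction k using Int.induction_on with
  | zero => exact ⟨u, by simp⟩
  | succ k ih =>
    obtain ⟨w, hw⟩ := ih
    obtain ⟨x, -, hx, -⟩ := hstep w
    exact ⟨x, by rw [sub_eq_iff_eq_add'.1 hx, hw]; module⟩
  | pred k ih =>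
    obtain ⟨w, hw⟩ := ih
    obtain ⟨-, y, -, hy⟩ := hstep w
    exact ⟨y, by rw [sub_eq_iff_eq_add'.1 hy, hw]; module⟩

theorem IsCycleGraph.exists_linEquiv_epsDiv (hC : G.IsCycleGraph) {f : V → ℤ}
    (hf : degree f = 1) : ∃ w, G.LinEquiv f (epsDiv w) := by
  obtain ⟨t, ht⟩ := hC.exists_step
  obtain ⟨q⟩ := hC.1.nonempty
  have hmem : ∀ v : V, (epsDiv v : G.Pic) - epsDiv q ∈ AddSubgroup.zmultiples t :=
    hC.1.sub_mem_of_adj (fun v w hvw => by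
      rcases ht v w hvw with h | h <;> rw [h]
      exacts [AddSubgroup.mem_zmultiples t, neg_mem (AddSubgroup.mem_zmultiples t)]) q
  have hsum : (f : G.Pic) - epsDiv q = ∑ v, f v • ((epsDiv v : G.Pic) - epsDiv q) := by
    rw [mk_eq_sum_smul (G := G) f]
    simp only [zsmul_sub, sum_sub_distrib]
    rw [← sum_smul, show ∑ v, f v = 1 from hf, one_smul]
  obtain ⟨k, hk⟩ := AddSubgroup.mem_zmultiples_iff.1
    (hsum ▸ sum_mem fun v _ => AddSubgroup.zsmul_mem _ (hmem v) _)
  obtain ⟨w, hw⟩ := hC.exists_mk_eq_add_zsmul ht q k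
  exact ⟨w, linEquiv_iff_mk_eq.2 (by rw [hw, hk]; abel)⟩

theorem IsCycleGraph.lEffective_of_one_le_degree (hC : G.IsCycleGraph) {f : V → ℤ}
    (hf : 1 ≤ degree f) : G.LEffective f := by
  obtain ⟨q⟩ := hC.1.nonempty
  obtain ⟨w, hw⟩ := hC.exists_linEquiv_epsDiv (f := f - (degree f - 1) • epsDiv q)
    (by rw [degree_sub, degree_smul_epsDiv]; ring)
  refine ⟨epsDiv w + (degree f - 1) • epsDiv q, ?_,
    fun v => add_nonneg (effective_epsDiv w v) (effective_smul_epsDiv (by omega) q v)⟩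
  rw [linEquiv_iff_mk_eq, QuotientAddGroup.mk_add, ← linEquiv_iff_mk_eq.1 hw,
    QuotientAddGroup.mk_sub, sub_add_cancel]

theorem IsCycleGraph.not_rankAtLeast_degree (hC : G.IsCycleGraph) {f : V → ℤ}
    (hf : 1 ≤ degree f) : ¬ G.RankAtLeast f (degree f) := by
  intro h
  obtain ⟨u⟩ := hC.1.nonempty
  obtain ⟨w, -, huw⟩ := exists_ne_zero_of_sum_ne_zero ((hC.2 u).trans_ne two_ne_zero)
  have hcls : ∀ v : V, (f : G.Pic) = ((degree f - 1) • epsDiv u : V → ℤ) + (epsDiv v : G.Pic) := by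
    intro v
    have hdeg : degree f = degree ((degree f - 1) • epsDiv u + epsDiv v) := by
      rw [degree_add, degree_smul_epsDiv, degree_epsDiv, sub_add_cancel]
    rw [← QuotientAddGroup.mk_add, ← linEquiv_iff_mk_eq]
    exact linEquiv_of_lEffective_sub hdeg (h _ (fun x => add_nonneg
      (effective_smul_epsDiv (by omega) u x) (effective_epsDiv v x)) hdeg.symm)
  have huw' : u = w := hC.1.eq_of_linEquiv_epsDiv (fun v => hC.2 v ▸ even_two)
    (linEquiv_iff_mk_eq.2 (add_left_cancel ((hcls u).symm.trans (hcls w))))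
  exact huw (huw' ▸ G.loopless u)

end Cycle

end Multigraph

theorem rank_cycle_general (G : Multigraph V)
    (hC : G.IsCycleGraph) (f : V → ℤ) :
    (degree f ≤ -1 → G.rank f = -1) ∧
    (degree f = 0 → G.Bad f → G.rank f = -1) ∧
    (degree f = 0 → G.Good f → G.rank f = 0) ∧
    (1 ≤ degree f → G.rank f = degree f - 1) := by
  have : Nonempty V := hC.1.nonempty
  refine ⟨fun hf => ?_, fun _ hbad => ?_, fun _ hgood => ?_, fun hf => ?_⟩
  · exact G.rank_eq le_rfl (by omega) (G.not_rankAtLeast_of_degree_lt le_rfl (by omega))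
  · refine G.rank_eq le_rfl (by omega) fun h => hbad.2 ?_
    exact (lEffective_iff_linEquiv_zero hbad.1).1 (rankAtLeast_zero_iff.1 h)
  · refine G.rank_eq (by norm_num) (fun _ => ?_) (G.not_rankAtLeast_of_degree_lt zero_le_one ?_)
    · exact rankAtLeast_zero_iff.2 ⟨0, hgood.2, fun _ => le_rfl⟩
    · rw [hgood.1]; exact zero_lt_one
  · refine G.rank_eq (by omega) (fun _ l _ hl => hC.lEffective_of_one_le_degree ?_) ?_
    · rw [degree_sub, hl]; omega
    · simpa using hC.not_rankAtLeast_degree hf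

/-- the rank of a divisor on a cycle with `n ≥ 3` vertices:
`-1` if `deg f ≤ -1`; `-1` if `deg f = 0` and `f` is bad; `0` if
`deg f = 0` and `f` is good; `deg f − 1` if `deg f ≥ 1`. -/
theorem rank_cycle (G : Multigraph V)
    (hC : G.IsCycleGraph) (hcard : 3 ≤ Fintype.card V) (f : V → ℤ) :
    (degree f ≤ -1 → G.rank f = -1) ∧
    (degree f = 0 → G.Bad f → G.rank f = -1) ∧
    (degree f = 0 → G.Good f → G.rank f = 0) ∧
    (1 ≤ degree f → G.rank f = degree f - 1) :=
  rank_cycle_general G hC f
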